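/- For a tuple M = (M_1,…,M_{n−1}) of linear maps M_i : V_i → V_{i+1}, let h_M ∈ GL(V) be the linear automorphism of V = V_1 ⊕ … ⊕ V_n whose diagonal blocks are identities, whose (i+1,i)-block is −M_i for i = 1,…,n−1, and all of whose other blocks are 0. Then the assignment M ↦ (h_M(E_1),…,h_M(E_n)) is a bijection from the set ∏_{i=1}^{n−1} Hom_k(V_i,V_{i+1}) of all such tuples M onto the set of flags F_1 ⊆ F_2 ⊆ … ⊆ F_n = V of subspaces of V with dim F_i = α_1 + … + α_i for all i, F_i ⊆ E_{i+1} for i = 1,…,n−1, and F_i ∩ E'_i = 0 for i = 1,…,n. (This is the dual Zelevinsky map for the linearly oriented quiver of type A_n.) -/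

import Mathlib

open Module

section

variable {k : Type} [Field k] {n : ℕ} (W : Fin n → Type)
  [∀ i, AddCommGroup (W i)] [∀ i, Module k (W i)]

/-- The subspace `E_m = V_1 ⊕ … ⊕ V_m` of `V = V_1 ⊕ … ⊕ V_n`
(0-based: the coordinates `< m`). -/
def Efl (m : ℕ) : Submodule k (∀ j, W j) where
  carrier := {f | ∀ j : Fin n, m ≤ (j : ℕ) → f j = 0}
  add_mem' := by
    intro f g hf hg j hj
    simp [Pi.add_apply, hf j hj, hg j hj]
  zero_mem' := by intro j hj; rfl
  smul_mem' := by
    intro c f hf j hj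
    simp [Pi.smul_apply, hf j hj]

/-- The subspace `E'_m = V_{m+1} ⊕ … ⊕ V_n` of `V` (0-based: the coordinates `≥ m`). -/
def Tl (m : ℕ) : Submodule k (∀ j, W j) where
  carrier := {f | ∀ j : Fin n, (j : ℕ) < m → f j = 0}
  add_mem' := by
    intro f g hf hg j hj
    simp [Pi.add_apply, hf j hj, hg j hj]
  zero_mem' := by intro j hj; rfl
  smul_mem' := by
    intro c f hf j hj
    simp [Pi.smul_apply, hf j hj]

/-- The block sub-diagonal endomorphism of `V = V_1 ⊕ … ⊕ V_n` determined by a tuple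
`M = (M_1,…,M_{n−1})` of maps `M_i : V_i → V_{i+1}`: its `(i+1,i)`-blocks are the `M_i`
and all other blocks are `0`. -/
def Dmat (M : ∀ i j : Fin n, (i : ℕ) + 1 = (j : ℕ) → (W i →ₗ[k] W j)) :
    (∀ j, W j) →ₗ[k] (∀ j, W j) :=
  LinearMap.pi (fun j : Fin n =>
    ∑ i : Fin n,
      if h : (i : ℕ) + 1 = (j : ℕ) then (M i j h).comp (LinearMap.proj i) else 0)

/-- The automorphism `h_M = id − D_M` of `V = V_1 ⊕ … ⊕ V_n`: its diagonal blocks are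
identities, its `(i+1,i)`-block is `−M_i`, and all other blocks are `0`. -/
def hMat (M : ∀ i j : Fin n, (i : ℕ) + 1 = (j : ℕ) → (W i →ₗ[k] W j)) :
    (∀ j, W j) →ₗ[k] (∀ j, W j) :=
  LinearMap.id - Dmat W M

end

/-!
`h_M = 1 - D_M`, where `D_M` moves coordinate `i` into coordinate `i + 1`; so `D_M` is nilpotent
and `h_M` is invertible. `D_M` maps `E_m` into `E_{m+1}` and `E'_m` into `E'_{m+1}`, hence
`h_M(E_{i+1}) ⊆ E_{i+2}`, and `h_M f ∈ E'_m` forces `f ∈ E'_m`, so `h_M(E_{i+1}) ∩ E'_{i+1} = 0`.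

For `v ∈ V_i`, `h_M v - h_{M'} v = (M'_i - M_i) v` lies in `h_M(E_{i+1}) ∩ E'_{i+1} = 0` when
`M` and `M'` give the same flag: this is injectivity.

Conversely, the conditions on `F_i` make it a complement of `E'_{i+1}`, so `v ∈ V_i` has a unique
lift to `F_i` agreeing with `v` in the coordinates `≤ i`; as `F_i ⊆ E_{i+2}` this lift is
`v - M_i v` for a linear `M_i`. Then `h_M` maps each `V_j`, `j ≤ i`, into `F_j ⊆ F_i`, so
`h_M(E_{i+1}) ⊆ F_i`, with equality by dimension.
-/

lemma Submodule.isCompl_of_disjoint_of_finrank_eq {K V : Type*} [Field K] [AddCommGroup V]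
    [Module K V] [FiniteDimensional K V] {p p' q : Submodule K V} (h : IsCompl p' q)
    (hd : Disjoint p q) (hr : finrank K p = finrank K p') : IsCompl p q :=
  (isCompl_iff_disjoint p q (by rw [hr, finrank_add_eq_of_isCompl h])).2 hd

section

variable {k : Type} [Field k] {n : ℕ} (W : Fin n → Type)
  [∀ i, AddCommGroup (W i)] [∀ i, Module k (W i)]

lemma Efl_mono : Monotone (Efl (k := k) W) :=
  fun _ _ h _ hf j hj => hf j (h.trans hj)

lemma Tl_antitone : Antitone (Tl (k := k) W) :=
  fun _ _ h _ hf j hj => hf j (hj.trans_le h)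

lemma Efl_eq_top {m : ℕ} (h : n ≤ m) : Efl (k := k) W m = ⊤ :=
  eq_top_iff.2 fun _ _ j hj => absurd (j.isLt.trans_le h) hj.not_gt

lemma Tl_eq_bot {m : ℕ} (h : n ≤ m) : Tl (k := k) W m = ⊥ :=
  eq_bot_iff.2 fun _ hf => funext fun j => hf j (j.isLt.trans_le h)

lemma Tl_zero : Tl (k := k) W 0 = ⊤ :=
  eq_top_iff.2 fun _ _ _ hj => absurd hj (Nat.not_lt_zero _)

lemma isCompl_Efl_Tl (m : ℕ) : IsCompl (Efl (k := k) W m) (Tl W m) := by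
  refine ⟨?_, codisjoint_iff.2 (eq_top_iff.2 fun f _ => ?_)⟩
  · refine Submodule.disjoint_def.2 fun f hE hT => funext fun j => ?_
    rcases lt_or_ge (j : ℕ) m with hj | hj
    exacts [hT j hj, hE j hj]
  · have hE : (fun j : Fin n => if (j : ℕ) < m then f j else 0) ∈ Efl (k := k) W m :=
      fun j hj => if_neg hj.not_gt
    have hT : (fun j : Fin n => if (j : ℕ) < m then 0 else f j) ∈ Tl (k := k) W m :=
      fun j hj => if_pos hj
    convert Submodule.add_mem_sup hE hT using 1
    funext j
    simp only [Pi.add_apply]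
    split_ifs <;> simp

lemma Efl_eq_iInf_ker_proj (m : ℕ) :
    Efl (k := k) W m =
      ⨅ j ∈ {j : Fin n | m ≤ (j : ℕ)}, LinearMap.ker (LinearMap.proj (R := k) (φ := W) j) := by
  ext f
  simp [Submodule.mem_iInf, Efl]

lemma finrank_Efl_succ [∀ i, FiniteDimensional k (W i)] (i : Fin n) :
    finrank k (Efl (k := k) W ((i : ℕ) + 1)) =
      ∑ j ∈ Finset.univ.filter (· ≤ i), finrank k (W j) := by
  classical
  have e := LinearMap.iInfKerProjEquiv k W (I := {j : Fin n | j ≤ i})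
    (J := {j : Fin n | (i : ℕ) + 1 ≤ (j : ℕ)})
    (Set.disjoint_left.2 fun j (h : j ≤ i) h' => (Fin.le_def.1 h).not_gt h')
    (fun j _ => (le_or_gt j i).imp id id)
  rw [Efl_eq_iInf_ker_proj, e.finrank_eq, Module.finrank_pi_fintype]
  exact (Finset.sum_subtype _ (by simp) (fun j => finrank k (W j))).symm

variable (M : ∀ i j : Fin n, (i : ℕ) + 1 = (j : ℕ) → (W i →ₗ[k] W j))

lemma Dmat_apply (f : ∀ j, W j) (j : Fin n) :
    Dmat W M f j = ∑ i : Fin n, if h : (i : ℕ) + 1 = (j : ℕ) then M i j h (f i) else 0 := by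
  simp only [Dmat, LinearMap.pi_apply, LinearMap.sum_apply]
  exact Finset.sum_congr rfl fun i _ => by split_ifs <;> rfl

lemma Dmat_apply_eq_zero {f : ∀ j, W j} {j : Fin n}
    (hf : ∀ i : Fin n, (i : ℕ) + 1 = (j : ℕ) → f i = 0) : Dmat W M f j = 0 := by
  rw [Dmat_apply]
  refine Finset.sum_eq_zero fun i _ => ?_
  split_ifs with h
  · rw [hf i h, map_zero]
  · rfl

lemma Dmat_apply_of_succ_eq (f : ∀ j, W j) {i j : Fin n} (h : (i : ℕ) + 1 = (j : ℕ)) :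
    Dmat W M f j = M i j h (f i) := by
  rw [Dmat_apply, Finset.sum_eq_single i]
  · rw [dif_pos h]
  · intro i' _ hi'
    rw [dif_neg fun h' => hi' (Fin.ext (by omega))]
  · simp

lemma Dmat_mem_Efl_succ {m : ℕ} {f : ∀ j, W j} (hf : f ∈ Efl (k := k) W m) :
    Dmat W M f ∈ Efl (k := k) W (m + 1) :=
  fun j hj => Dmat_apply_eq_zero W M fun i hi => hf i (by omega)

lemma Dmat_mem_Tl_succ {m : ℕ} {f : ∀ j, W j} (hf : f ∈ Tl (k := k) W m) :
    Dmat W M f ∈ Tl (k := k) W (m + 1) :=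
  fun j hj => Dmat_apply_eq_zero W M fun i hi => hf i (by omega)

lemma Dmat_pow_mem_Tl (m : ℕ) (f : ∀ j, W j) : (Dmat W M ^ m) f ∈ Tl (k := k) W m := by
  induction m with
  | zero => simp [Tl_zero]
  | succ m ih =>
    rw [pow_succ', Module.End.mul_apply]
    exact Dmat_mem_Tl_succ W M ih

lemma isNilpotent_Dmat : IsNilpotent (Dmat W M) :=
  ⟨n, LinearMap.ext fun f => by
    simpa [Tl_eq_bot W le_rfl] using Dmat_pow_mem_Tl W M n f⟩

lemma hMat_bijective : Function.Bijective (hMat W M) :=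
  (Module.End.isUnit_iff _).1 (isNilpotent_Dmat W M).isUnit_one_sub

lemma hMat_mem_Efl_succ {m : ℕ} {f : ∀ j, W j} (hf : f ∈ Efl (k := k) W m) :
    hMat W M f ∈ Efl (k := k) W (m + 1) :=
  sub_mem (Efl_mono W m.le_succ hf) (Dmat_mem_Efl_succ W M hf)

lemma mem_Tl_of_hMat_mem_Tl {m : ℕ} {f : ∀ j, W j} (hf : hMat W M f ∈ Tl (k := k) W m) :
    f ∈ Tl (k := k) W m := by
  induction m with
  | zero => simp [Tl_zero]
  | succ m ih =>
    have hfm : f ∈ Tl W m := ih (Tl_antitone W m.le_succ hf)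
    have : f = hMat W M f + Dmat W M f := by simp [hMat]
    rw [this]
    exact add_mem hf (Dmat_mem_Tl_succ W M hfm)

lemma disjoint_map_hMat_Efl_Tl (m : ℕ) :
    Disjoint (Submodule.map (hMat W M) (Efl W m)) (Tl (k := k) W m) := by
  refine Submodule.disjoint_def.2 ?_
  rintro _ ⟨f, hf, rfl⟩ hT
  have : f = 0 := Submodule.disjoint_def.1 (isCompl_Efl_Tl W m).disjoint f hf
    (mem_Tl_of_hMat_mem_Tl W M hT)
  rw [this, map_zero]

lemma map_hMat_Efl_le_Efl_succ (m : ℕ) :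
    Submodule.map (hMat W M) (Efl W m) ≤ Efl (k := k) W (m + 1) :=
  Submodule.map_le_iff_le_comap.2 fun _ hf => hMat_mem_Efl_succ W M hf

lemma map_hMat_Efl_eq_top {m : ℕ} (h : n ≤ m) :
    Submodule.map (hMat W M) (Efl W m) = (⊤ : Submodule k (∀ j, W j)) := by
  rw [Efl_eq_top W h, Submodule.map_top, LinearMap.range_eq_top.2 (hMat_bijective W M).2]

lemma finrank_map_hMat [∀ i, FiniteDimensional k (W i)] (p : Submodule k (∀ j, W j)) :
    finrank k (Submodule.map (hMat W M) p) = finrank k p :=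
  (LinearEquiv.ofBijective (hMat W M) (hMat_bijective W M)).finrank_map_eq p

lemma single_mem_Efl (i : Fin n) (v : W i) : Pi.single i v ∈ Efl (k := k) W ((i : ℕ) + 1) :=
  fun j hj => Pi.single_eq_of_ne (by rintro rfl; omega) v

lemma single_mem_Tl (i : Fin n) (v : W i) : Pi.single i v ∈ Tl (k := k) W i :=
  fun j hj => Pi.single_eq_of_ne (by rintro rfl; omega) v

lemma Dmat_single_apply (i j : Fin n) (v : W i) :
    Dmat W M (Pi.single i v) j = if h : (i : ℕ) + 1 = (j : ℕ) then M i j h v else 0 := by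
  split_ifs with h
  · rw [Dmat_apply_of_succ_eq W M _ h, Pi.single_eq_same]
  · exact Dmat_apply_eq_zero W M fun i' hi' =>
      Pi.single_eq_of_ne (by rintro rfl; exact h hi') v

lemma eq_of_map_hMat_Efl_eq {M M' : ∀ i j : Fin n, (i : ℕ) + 1 = (j : ℕ) → (W i →ₗ[k] W j)}
    (h : ∀ i : Fin n, Submodule.map (hMat W M) (Efl W ((i : ℕ) + 1)) =
      Submodule.map (hMat W M') (Efl W ((i : ℕ) + 1))) :
    M = M' := by
  funext i j hij
  ext v
  set e := Pi.single i v
  have hdiff : hMat W M e - hMat W M' e = Dmat W M' e - Dmat W M e :=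
    sub_sub_sub_cancel_left _ _ _
  have hmem : Dmat W M' e - Dmat W M e ∈ Submodule.map (hMat W M) (Efl W ((i : ℕ) + 1)) := by
    rw [← hdiff]
    refine sub_mem (Submodule.mem_map_of_mem (single_mem_Efl W i v)) ?_
    rw [h i]
    exact Submodule.mem_map_of_mem (single_mem_Efl W i v)
  have hTl : Dmat W M' e - Dmat W M e ∈ Tl (k := k) W ((i : ℕ) + 1) :=
    sub_mem (Dmat_mem_Tl_succ W M' (single_mem_Tl W i v))
      (Dmat_mem_Tl_succ W M (single_mem_Tl W i v))
  have hzero := congrFun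
    (Submodule.disjoint_def.1 (disjoint_map_hMat_Efl_Tl W M _) _ hmem hTl) j
  rw [Pi.sub_apply, Dmat_single_apply, Dmat_single_apply, dif_pos hij, dif_pos hij,
    Pi.zero_apply, sub_eq_zero] at hzero
  exact hzero.symm

lemma map_hMat_Efl_le_of_single_mem (F : Fin n → Submodule k (∀ j, W j))
    (hmono : ∀ i j : Fin n, i ≤ j → F i ≤ F j)
    (hsingle : ∀ (i : Fin n) (v : W i), hMat W M (Pi.single i v) ∈ F i) (i : Fin n) :
    Submodule.map (hMat W M) (Efl W ((i : ℕ) + 1)) ≤ F i := by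
  rintro _ ⟨f, hf, rfl⟩
  rw [← Finset.univ_sum_single f, map_sum]
  refine Submodule.sum_mem _ fun j _ => ?_
  by_cases hj : j ≤ i
  · exact hmono j i hj (hsingle j (f j))
  · rw [hf j (by rw [Fin.le_def] at hj; omega), Pi.single_zero, map_zero]
    exact zero_mem _

noncomputable def mapsOfFlag (F : Fin n → Submodule k (∀ j, W j))
    (hF : ∀ i : Fin n, IsCompl (F i) (Tl W ((i : ℕ) + 1))) :
    ∀ i j : Fin n, (i : ℕ) + 1 = (j : ℕ) → (W i →ₗ[k] W j) := fun i j _ =>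
  -(LinearMap.proj j ∘ₗ (F i).projection _ (hF i) ∘ₗ LinearMap.single k W i)

lemma hMat_mapsOfFlag_single (F : Fin n → Submodule k (∀ j, W j))
    (hF : ∀ i : Fin n, IsCompl (F i) (Tl W ((i : ℕ) + 1)))
    (hE : ∀ i : Fin n, (i : ℕ) + 1 < n → F i ≤ Efl W ((i : ℕ) + 2)) (i : Fin n) (v : W i) :
    hMat W (mapsOfFlag W F hF) (Pi.single i v) =
      (F i).projection _ (hF i) (Pi.single i v) := by
  set g := (F i).projection _ (hF i) (Pi.single i v)
  have hlow : Pi.single i v - g ∈ Tl (k := k) W ((i : ℕ) + 1) :=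
    Submodule.sub_projection_mem (hF i) _
  have hhigh : g ∈ Efl (k := k) W ((i : ℕ) + 2) := by
    by_cases hi : (i : ℕ) + 1 < n
    · exact hE i hi (Submodule.projection_apply_mem _ _)
    · rw [Efl_eq_top W (by omega)]
      exact Submodule.mem_top
  funext j
  change Pi.single i v j - Dmat W _ (Pi.single i v) j = g j
  rw [Dmat_single_apply]
  rcases lt_trichotomy (j : ℕ) ((i : ℕ) + 1) with hj | hj | hj
  · rw [dif_neg hj.ne', sub_zero, ← sub_eq_zero]
    exact hlow j hj
  · rw [dif_pos hj.symm, Pi.single_eq_of_ne (by rintro rfl; omega)]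
    simp [mapsOfFlag, g]
  · rw [dif_neg (by omega), Pi.single_eq_of_ne (by rintro rfl; omega), hhigh j hj]
    exact sub_zero 0

lemma exists_map_hMat_Efl_eq [∀ i, FiniteDimensional k (W i)]
    (F : Fin n → Submodule k (∀ j, W j))
    (hmono : ∀ i j : Fin n, i ≤ j → F i ≤ F j)
    (hrank : ∀ i : Fin n,
      finrank k (F i) = ∑ j ∈ Finset.univ.filter (· ≤ i), finrank k (W j))
    (hE : ∀ i : Fin n, (i : ℕ) + 1 < n → F i ≤ Efl W ((i : ℕ) + 2))
    (hT : ∀ i : Fin n, F i ⊓ Tl W ((i : ℕ) + 1) = ⊥) :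
    ∃ M : ∀ i j : Fin n, (i : ℕ) + 1 = (j : ℕ) → (W i →ₗ[k] W j),
      ∀ i : Fin n, Submodule.map (hMat W M) (Efl W ((i : ℕ) + 1)) = F i := by
  have hF : ∀ i : Fin n, IsCompl (F i) (Tl W ((i : ℕ) + 1)) := fun i =>
    Submodule.isCompl_of_disjoint_of_finrank_eq (isCompl_Efl_Tl W _) (disjoint_iff.2 (hT i))
      (by rw [hrank, finrank_Efl_succ])
  refine ⟨mapsOfFlag W F hF, fun i => Submodule.eq_of_le_of_finrank_eq ?_ ?_⟩
  · refine map_hMat_Efl_le_of_single_mem W _ F hmono (fun j v => ?_) i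
    rw [hMat_mapsOfFlag_single W F hF hE]
    exact Submodule.projection_apply_mem _ _
  · rw [finrank_map_hMat, finrank_Efl_succ, hrank]

end

/-- The dual Zelevinsky map: `M ↦ (h_M(E_1),…,h_M(E_n))` is a bijection from the set of
all tuples `M = (M_1,…,M_{n−1})` of linear maps `M_i : V_i → V_{i+1}` onto the set of
flags `F_1 ⊆ … ⊆ F_n = V` with `dim F_i = α_1 + … + α_i`, `F_i ⊆ E_{i+1}` for
`i = 1,…,n−1`, and `F_i ∩ E'_i = 0` for `i = 1,…,n`. (Indexed 0-based.) -/
theorem statement17 {k : Type} [Field k] {n : ℕ} (hn : 1 ≤ n) (W : Fin n → Type)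
    [∀ i, AddCommGroup (W i)] [∀ i, Module k (W i)] [∀ i, FiniteDimensional k (W i)] :
    Set.BijOn
      (fun M : ∀ i j : Fin n, (i : ℕ) + 1 = (j : ℕ) → (W i →ₗ[k] W j) =>
        fun i : Fin n => Submodule.map (hMat W M) (Efl W ((i : ℕ) + 1)))
      Set.univ
      {F : Fin n → Submodule k (∀ j, W j) |
        (∀ i j : Fin n, i ≤ j → F i ≤ F j) ∧
        F ⟨n - 1, by omega⟩ = ⊤ ∧
        (∀ i : Fin n,
          finrank k (F i) = ∑ j ∈ Finset.univ.filter (· ≤ i), finrank k (W j)) ∧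
        (∀ (i : Fin n), (i : ℕ) + 1 < n → F i ≤ Efl W ((i : ℕ) + 2)) ∧
        (∀ i : Fin n, F i ⊓ Tl W ((i : ℕ) + 1) = ⊥)} := by
  refine ⟨fun M _ => ⟨?_, ?_, ?_, ?_, ?_⟩, fun M _ M' _ h => ?_, fun F hF => ?_⟩
  · exact fun i j hij => Submodule.map_mono (Efl_mono W (by rw [Fin.le_def] at hij; omega))
  · exact map_hMat_Efl_eq_top W M (by simp only; omega)
  · exact fun i => by rw [finrank_map_hMat, finrank_Efl_succ]
  · exact fun i _ => map_hMat_Efl_le_Efl_succ W M _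
  · exact fun i => disjoint_iff.1 (disjoint_map_hMat_Efl_Tl W M _)
  · exact eq_of_map_hMat_Efl_eq W (congrFun h)
  · obtain ⟨hmono, -, hrank, hE, hT⟩ := hF
    obtain ⟨M, hM⟩ := exists_map_hMat_Efl_eq W F hmono hrank hE hT
    exact ⟨M, trivial, funext hM⟩
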